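/- Under the inductive-bias model, with per-rival SNR ρ_{i*j} = Δ_{i*j}/ν_{i*j} and ρ₁ = min_{j≠i*} ρ_{i*j} > 0, the probability that two independent benchmarks of size N disagree on the top-ranked model is at most 2(k−1)·Φ(−ρ₁√N). -/
import Mathlib


open MeasureTheory ProbabilityTheory

/-- The standard normal CDF `Φ(x) = P(Z ≤ x)` for `Z ~ N(0,1)`. -/
noncomputable def stdNormalCDF (x : ℝ) : ℝ := (gaussianReal 0 1 (Set.Iic x)).toReal

lemma gauss_map_std (v : NNReal) (m : ℝ) :
    (gaussianReal 0 1).map (fun y => Real.sqrt v * y + m) = gaussianReal m v := by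
  have h1 : (gaussianReal 0 1).map (fun y => Real.sqrt v * y) = gaussianReal 0 v := by
    rw [show (fun y => Real.sqrt v * y) = (Real.sqrt v * ·) from rfl,
      gaussianReal_map_const_mul]
    congr 1
    · ring
    · ext
      simp [Real.sq_sqrt v.2]
  have h2 : (fun y => Real.sqrt v * y + m) = (· + m) ∘ (fun y => Real.sqrt v * y) := rfl
  rw [h2, ← Measure.map_map (by fun_prop) (by fun_prop), h1, gaussianReal_map_add_const]
  simp

lemma gauss_Iic (m : ℝ) (v : NNReal) (hv : v ≠ 0) (x : ℝ) :
    (gaussianReal m v (Set.Iic x)).toReal = stdNormalCDF ((x - m) / Real.sqrt v) := by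
  have hs' : (0:ℝ) < Real.sqrt v := Real.sqrt_pos.2 (by positivity)
  rw [← gauss_map_std v m, Measure.map_apply (by fun_prop) measurableSet_Iic]
  have : (fun y => Real.sqrt v * y + m) ⁻¹' Set.Iic x = Set.Iic ((x - m) / Real.sqrt v) := by
    ext y
    simp only [Set.mem_preimage, Set.mem_Iic]
    rw [le_div_iff₀ hs']
    constructor <;> intro h <;> nlinarith
  rw [this]; rfl

lemma stdNormalCDF_mono : Monotone stdNormalCDF := fun x y hxy => by
  unfold stdNormalCDF
  exact ENNReal.toReal_mono (measure_ne_top _ _) (measure_mono (Set.Iic_subset_Iic.2 hxy))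

/-- Position-1 disagreement under the inductive-bias model: with per-rival SNR
`ρ_{i*j} = Δ_{i*j}/ν_{i*j}` and `ρ₁ = min_{j≠i*} ρ_{i*j} > 0`, the probability that
two independent benchmarks of size `N` disagree on the top-ranked model is at most
`2(k−1)·Φ(−ρ₁√N)`. -/
theorem position_one_disagreement_inductive_bias
    {Ω : Type*} [MeasurableSpace Ω] (μ : Measure Ω) [IsProbabilityMeasure μ]
    (k N : ℕ) (hk : 2 ≤ k) (hN : 1 ≤ N)
    (μs : Fin k → ℝ) (istar : Fin k)
    (hmax : ∀ j, j ≠ istar → μs j < μs istar)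
    (ν : Fin k → ℝ) (hν : ∀ j, j ≠ istar → 0 < ν j)
    (hne : (Finset.univ.erase istar).Nonempty)
    (ρ1 : ℝ)
    (hρ1 : ρ1 = (Finset.univ.erase istar).inf' hne (fun j => (μs istar - μs j) / ν j))
    (hρ1pos : 0 < ρ1)
    (Xbar Xbar' : Fin k → Ω → ℝ)
    (hXmeas : ∀ i, Measurable (Xbar i)) (hX'meas : ∀ i, Measurable (Xbar' i))
    (hlaw : ∀ j, j ≠ istar →
      Measure.map (fun ω => Xbar istar ω - Xbar j ω) μ =
        gaussianReal (μs istar - μs j) (Real.toNNReal ((ν j) ^ 2 / N)))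
    (hlaw' : ∀ j, j ≠ istar →
      Measure.map (fun ω => Xbar' istar ω - Xbar' j ω) μ =
        gaussianReal (μs istar - μs j) (Real.toNNReal ((ν j) ^ 2 / N)))
    (hindep : IndepFun (fun ω i => Xbar i ω) (fun ω i => Xbar' i ω) μ) :
    (μ {ω | ¬ ∃ i, (∀ j, j ≠ i → Xbar j ω < Xbar i ω) ∧
        (∀ j, j ≠ i → Xbar' j ω < Xbar' i ω)}).toReal ≤
      2 * ((k : ℝ) - 1) * stdNormalCDF (-(ρ1 * Real.sqrt N)) := by
  have hNpos : (0:ℝ) < N := by exact_mod_cast hN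
  have hsN : (0:ℝ) < Real.sqrt N := Real.sqrt_pos.2 hNpos
  set E := Finset.univ.erase istar with hE
  -- per-rival bound
  have key : ∀ (Y : Fin k → Ω → ℝ), (∀ i, Measurable (Y i)) →
      (∀ j, j ≠ istar → Measure.map (fun ω => Y istar ω - Y j ω) μ =
        gaussianReal (μs istar - μs j) (Real.toNNReal ((ν j) ^ 2 / N))) →
      ∀ j, j ≠ istar →
      (μ {ω | Y istar ω - Y j ω ≤ 0}).toReal ≤ stdNormalCDF (-(ρ1 * Real.sqrt N)) := by
    intro Y hY hlawY j hj
    have hνj := hν j hj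
    have hΔ : 0 < μs istar - μs j := sub_pos.2 (hmax j hj)
    have hset : {ω | Y istar ω - Y j ω ≤ 0} = (fun ω => Y istar ω - Y j ω) ⁻¹' Set.Iic 0 := rfl
    rw [hset, ← Measure.map_apply (by fun_prop) measurableSet_Iic, hlawY j hj,
      gauss_Iic _ _ (by simp only [ne_eq, Real.toNNReal_eq_zero, not_le]; positivity)]
    apply stdNormalCDF_mono
    have hsqv : Real.sqrt (Real.toNNReal ((ν j) ^ 2 / N)) = ν j / Real.sqrt N := by
      rw [Real.coe_toNNReal _ (by positivity), Real.sqrt_div (sq_nonneg _),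
        Real.sqrt_sq hνj.le]
    rw [hsqv]
    have hρle : ρ1 ≤ (μs istar - μs j) / ν j := by
      rw [hρ1]
      exact Finset.inf'_le _ (Finset.mem_erase.2 ⟨hj, Finset.mem_univ j⟩)
    have heq : (0 - (μs istar - μs j)) / (ν j / Real.sqrt N)
        = -(((μs istar - μs j) / ν j) * Real.sqrt N) := by
      field_simp
      ring
    rw [heq, neg_le_neg_iff]
    exact mul_le_mul_of_nonneg_right hρle hsN.le
  -- subset of union
  set A : Fin k → Set Ω := fun j => {ω | Xbar istar ω - Xbar j ω ≤ 0} with hA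
  set A' : Fin k → Set Ω := fun j => {ω | Xbar' istar ω - Xbar' j ω ≤ 0} with hA'
  have hsub : {ω | ¬ ∃ i, (∀ j, j ≠ i → Xbar j ω < Xbar i ω) ∧
      (∀ j, j ≠ i → Xbar' j ω < Xbar' i ω)} ⊆ ⋃ j ∈ E, (A j ∪ A' j) := by
    intro ω hω
    simp only [Set.mem_setOf_eq] at hω
    by_contra hcon
    refine hω ⟨istar, fun j hj => ?_, fun j hj => ?_⟩ <;>
    · have hj' : j ∈ E := Finset.mem_erase.2 ⟨hj, Finset.mem_univ j⟩
      have hn : ω ∉ A j ∪ A' j := fun h => hcon (Set.mem_biUnion hj' h)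
      rcases not_or.1 (by simpa [Set.mem_union] using hn) with ⟨h1, h2⟩
      simp only [hA, hA', Set.mem_setOf_eq, not_le] at h1 h2
      linarith
  have hcard : (E.card : ℝ) = (k:ℝ) - 1 := by
    rw [hE, Finset.card_erase_of_mem (Finset.mem_univ _)]
    simp
    rw [Nat.cast_sub (by omega)]
    simp
  have hfin : ∀ j ∈ E, μ (A j) + μ (A' j) ≠ ⊤ := fun j _ => by
    simp [ENNReal.add_ne_top, measure_ne_top]
  calc (μ _).toReal ≤ ((∑ j ∈ E, (μ (A j) + μ (A' j)))).toReal := by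
        refine ENNReal.toReal_mono (ENNReal.sum_ne_top.2 hfin) ?_
        exact (measure_mono hsub).trans ((measure_biUnion_finset_le _ _).trans
          (Finset.sum_le_sum fun j _ => measure_union_le _ _))
    _ = ∑ j ∈ E, ((μ (A j)).toReal + (μ (A' j)).toReal) := by
        rw [ENNReal.toReal_sum hfin]
        exact Finset.sum_congr rfl fun j _ =>
          ENNReal.toReal_add (measure_ne_top _ _) (measure_ne_top _ _)
    _ ≤ ∑ j ∈ E, (stdNormalCDF (-(ρ1 * Real.sqrt N)) + stdNormalCDF (-(ρ1 * Real.sqrt N))) := by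
        refine Finset.sum_le_sum fun j hj => ?_
        have hj' : j ≠ istar := (Finset.mem_erase.1 hj).1
        exact add_le_add (key Xbar hXmeas hlaw j hj') (key Xbar' hX'meas hlaw' j hj')
    _ = 2 * ((k : ℝ) - 1) * stdNormalCDF (-(ρ1 * Real.sqrt N)) := by
        rw [Finset.sum_const, nsmul_eq_mul, hcard]; ring
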